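/- Let f be a real polynomial of degree 2p-1 with p \ge 2. For every \delta with 0 < \delta < 1, there exists C > 0 such that for all real x, y: |f(x) - f(y) - f'(y)(x - y)| \le C (|x| + |y| + 1)^{2p-2-\delta} |x - y|^{1+\delta}. -/

import Mathlib

/-!
Summing the monomials, it suffices to bound the Taylor remainder of `x ^ n`. Writing it as
`(x - y) * ∑ i < n, y ^ (n - 1 - i) * (x ^ i - y ^ i)` gives the quadratic bound
`n² M ^ (n - 2) |x - y|²` whenever `|x|, |y| ≤ M`. Since `|x - y| ≤ M` as well and `δ ≤ 1`, one may
trade `|x - y| ^ (1 - δ)` for `M ^ (1 - δ)`, and `M = |x| + |y| + 1 ≥ 1` makes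
`M ^ (n - 1 - δ)` monotone in `n ≤ 2p - 1`.
-/

open Finset

theorem pow_sub_pow_sub_mul_eq_mul_sum {R : Type*} [CommRing R] (x y : R) (n : ℕ) :
    x ^ n - y ^ n - n * y ^ (n - 1) * (x - y) =
      (x - y) * ∑ i ∈ range n, y ^ (n - 1 - i) * (x ^ i - y ^ i) := by
  have hterm : ∀ i ∈ range n, y ^ (n - 1 - i) * (x ^ i - y ^ i) =
      x ^ i * y ^ (n - 1 - i) - y ^ (n - 1) := fun i hi => by
    rw [mul_sub, ← pow_add, Nat.sub_add_cancel (by grind)]; ring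
  rw [sum_congr rfl hterm, sum_sub_distrib, ← geom_sum₂_mul, sum_const, card_range, nsmul_eq_mul]
  ring

section PowRemainder

variable {R : Type*} [CommRing R] [LinearOrder R] [IsOrderedRing R] {x y M : R}

theorem abs_pow_sub_pow_le_of_abs_le (hx : |x| ≤ M) (hy : |y| ≤ M) (n : ℕ) :
    |x ^ n - y ^ n| ≤ n * M ^ (n - 1) * |x - y| :=
  calc |x ^ n - y ^ n| ≤ |x - y| * n * max |x| |y| ^ (n - 1) := abs_pow_sub_pow_le ..
    _ ≤ |x - y| * n * M ^ (n - 1) := by gcongr; exact max_le hx hy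
    _ = n * M ^ (n - 1) * |x - y| := by ring

theorem abs_pow_sub_pow_sub_mul_le (hx : |x| ≤ M) (hy : |y| ≤ M) (n : ℕ) :
    |x ^ n - y ^ n - n * y ^ (n - 1) * (x - y)| ≤ n ^ 2 * M ^ (n - 2) * |x - y| ^ 2 := by
  have hM : 0 ≤ M := (abs_nonneg x).trans hx
  have hterm : ∀ i ∈ range n, |y ^ (n - 1 - i) * (x ^ i - y ^ i)| ≤ n * M ^ (n - 2) * |x - y| := by
    intro i hi
    have hin : i < n := mem_range.mp hi
    rcases Nat.eq_zero_or_pos i with rfl | hi0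
    · simp only [pow_zero, sub_self, mul_zero, abs_zero]; positivity
    calc |y ^ (n - 1 - i) * (x ^ i - y ^ i)|
        ≤ M ^ (n - 1 - i) * (i * M ^ (i - 1) * |x - y|) := by
          rw [abs_mul, abs_pow]
          gcongr
          exact abs_pow_sub_pow_le_of_abs_le hx hy i
      _ = i * M ^ (n - 2) * |x - y| := by
          rw [show n - 2 = n - 1 - i + (i - 1) by omega, pow_add]; ring
      _ ≤ n * M ^ (n - 2) * |x - y| := by gcongr
  calc |x ^ n - y ^ n - n * y ^ (n - 1) * (x - y)|
      ≤ |x - y| * ∑ i ∈ range n, |y ^ (n - 1 - i) * (x ^ i - y ^ i)| := by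
        rw [pow_sub_pow_sub_mul_eq_mul_sum, abs_mul]
        gcongr
        exact abs_sum_le_sum_abs _ _
    _ ≤ |x - y| * ∑ _i ∈ range n, n * M ^ (n - 2) * |x - y| := by gcongr with i hi; exact hterm i hi
    _ = n ^ 2 * M ^ (n - 2) * |x - y| ^ 2 := by rw [sum_const, card_range, nsmul_eq_mul]; ring

end PowRemainder

theorem abs_pow_sub_pow_sub_mul_le_rpow {x y M δ : ℝ} (hδ : δ ≤ 1) (hx : |x| ≤ M) (hy : |y| ≤ M)
    (hxy : |x - y| ≤ M) (n : ℕ) :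
    |x ^ n - y ^ n - n * y ^ (n - 1) * (x - y)| ≤
      n ^ 2 * M ^ ((n : ℝ) - 1 - δ) * |x - y| ^ (1 + δ) := by
  have hM0 : 0 ≤ M := (abs_nonneg x).trans hx
  have hrhs : 0 ≤ n ^ 2 * M ^ ((n : ℝ) - 1 - δ) * |x - y| ^ (1 + δ) := by
    have := Real.rpow_nonneg hM0 ((n : ℝ) - 1 - δ); positivity
  rcases eq_or_ne x y with rfl | hne
  · simpa using hrhs
  rcases lt_or_ge n 2 with hn | hn
  · have hzero : x ^ n - y ^ n - n * y ^ (n - 1) * (x - y) = 0 := by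
      interval_cases n <;> simp
    rwa [hzero, abs_zero]
  have hd : 0 < |x - y| := abs_pos.mpr (sub_ne_zero.mpr hne)
  have hM : 0 < M := hd.trans_le hxy
  calc |x ^ n - y ^ n - n * y ^ (n - 1) * (x - y)|
      ≤ n ^ 2 * M ^ (n - 2) * |x - y| ^ 2 := abs_pow_sub_pow_sub_mul_le hx hy n
    _ = n ^ 2 * M ^ ((n - 2 : ℕ) : ℝ) * (|x - y| ^ (1 - δ) * |x - y| ^ (1 + δ)) := by
        rw [← Real.rpow_add hd, show (1 - δ) + (1 + δ) = ((2 : ℕ) : ℝ) by norm_num,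
          Real.rpow_natCast, Real.rpow_natCast]
    _ ≤ n ^ 2 * M ^ ((n - 2 : ℕ) : ℝ) * (M ^ (1 - δ) * |x - y| ^ (1 + δ)) := by
        gcongr
    _ = n ^ 2 * M ^ ((n : ℝ) - 1 - δ) * |x - y| ^ (1 + δ) := by
        rw [show (n : ℝ) - 1 - δ = ((n - 2 : ℕ) : ℝ) + (1 - δ) by rw [Nat.cast_sub hn]; ring,
          Real.rpow_add hM]
        ring

theorem abs_sum_sub_sum_sub_mul_le_rpow (s : Finset ℕ) (a : ℕ → ℝ) {x y M N δ : ℝ}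
    (hN : ∀ k ∈ s, (k : ℝ) ≤ N) (hδ : δ ≤ 1) (hM : 1 ≤ M) (hx : |x| ≤ M) (hy : |y| ≤ M)
    (hxy : |x - y| ≤ M) :
    |(∑ k ∈ s, a k * x ^ k) - (∑ k ∈ s, a k * y ^ k) - (∑ k ∈ s, a k * k * y ^ (k - 1)) * (x - y)| ≤
      (∑ k ∈ s, |a k| * k ^ 2) * M ^ (N - 1 - δ) * |x - y| ^ (1 + δ) := by
  have hsplit : (∑ k ∈ s, a k * x ^ k) - (∑ k ∈ s, a k * y ^ k) -
      (∑ k ∈ s, a k * k * y ^ (k - 1)) * (x - y) =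
        ∑ k ∈ s, a k * (x ^ k - y ^ k - k * y ^ (k - 1) * (x - y)) := by
    rw [sum_mul, ← sum_sub_distrib, ← sum_sub_distrib]
    exact sum_congr rfl fun k _ => by ring
  rw [hsplit, sum_mul, sum_mul]
  refine (abs_sum_le_sum_abs _ _).trans (sum_le_sum fun k hk => ?_)
  calc |a k * (x ^ k - y ^ k - k * y ^ (k - 1) * (x - y))|
      ≤ |a k| * (k ^ 2 * M ^ ((k : ℝ) - 1 - δ) * |x - y| ^ (1 + δ)) := by
        rw [abs_mul]
        gcongr
        exact abs_pow_sub_pow_sub_mul_le_rpow hδ hx hy hxy k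
    _ ≤ |a k| * (k ^ 2 * M ^ (N - 1 - δ) * |x - y| ^ (1 + δ)) := by
        gcongr
        exact hN k hk
    _ = |a k| * k ^ 2 * M ^ (N - 1 - δ) * |x - y| ^ (1 + δ) := by ring

theorem statement5_general (p : ℕ) (a : ℕ → ℝ) (δ : ℝ) (hδ1 : δ < 1) :
    ∃ C > 0, ∀ x y : ℝ,
      |(∑ k ∈ Finset.Icc 1 (2*p-1), a k * x ^ k) -
        (∑ k ∈ Finset.Icc 1 (2*p-1), a k * y ^ k) -
        (∑ k ∈ Finset.Icc 1 (2*p-1), a k * k * y ^ (k-1)) * (x - y)| ≤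
        C * (|x| + |y| + 1) ^ ((2*p : ℝ) - 2 - δ) * |x - y| ^ ((1:ℝ) + δ) := by
  refine ⟨∑ k ∈ Icc 1 (2 * p - 1), |a k| * k ^ 2 + 1, by positivity, fun x y => ?_⟩
  have hdeg : ∀ k ∈ Icc 1 (2 * p - 1), (k : ℝ) ≤ 2 * p - 1 := fun k hk => by
    have hk' : ((k + 1 : ℕ) : ℝ) ≤ (2 * p : ℕ) := by
      exact_mod_cast (by grind : k + 1 ≤ 2 * p)
    push_cast at hk'
    linarith
  have hM : 1 ≤ |x| + |y| + 1 := by linarith [abs_nonneg x, abs_nonneg y]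
  calc _ ≤ (∑ k ∈ Icc 1 (2 * p - 1), |a k| * k ^ 2) * (|x| + |y| + 1) ^ ((2 * p - 1 : ℝ) - 1 - δ) *
        |x - y| ^ (1 + δ) :=
      abs_sum_sub_sum_sub_mul_le_rpow _ a hdeg hδ1.le hM (by linarith [abs_nonneg y])
        (by linarith [abs_nonneg x]) (by linarith [abs_sub x y])
    _ ≤ _ := by
      rw [show (2 * p - 1 : ℝ) - 1 - δ = 2 * p - 2 - δ by ring]
      gcongr
      linarith

theorem statement5 (p : ℕ) (hp : 2 ≤ p) (a : ℕ → ℝ) (δ : ℝ) (hδ0 : 0 < δ) (hδ1 : δ < 1) :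
    ∃ C > 0, ∀ x y : ℝ,
      |(∑ k ∈ Finset.Icc 1 (2*p-1), a k * x ^ k) -
        (∑ k ∈ Finset.Icc 1 (2*p-1), a k * y ^ k) -
        (∑ k ∈ Finset.Icc 1 (2*p-1), a k * k * y ^ (k-1)) * (x - y)| ≤
        C * (|x| + |y| + 1) ^ ((2*p : ℝ) - 2 - δ) * |x - y| ^ ((1:ℝ) + δ) :=
  statement5_general p a δ hδ1
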